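/- A pure subact of an absolutely pure S-act is absolutely pure. -/

import Mathlib

universe u

open Cardinal

/-- A (finite-system component) equation over an `S`-act `B` in `n` unknowns:
`xᵢ r = xᵢ s`, `xᵢ r = xⱼ s`, or `xᵢ r = a` with `a ∈ B`. -/
inductive ActEq (S : Type u) (B : Type u) (n : ℕ) where
  | xrxs (i : Fin n) (r s : S)
  | xrys (i j : Fin n) (r s : S)
  | xra (i : Fin n) (r : S) (a : B)

/-- An assignment `v` of the unknowns satisfies an equation. -/
def SatEq {S B : Type u} [Monoid S] [MulAction S B] {n : ℕ} (v : Fin n → B) :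
    ActEq S B n → Prop
  | .xrxs i r s => r • v i = s • v i
  | .xrys i j r s => r • v i = s • v j
  | .xra i r a => r • v i = a

/-- The constants of the equation lie in the subset `U`. -/
def ConstIn {S B : Type u} (U : Set B) {n : ℕ} : ActEq S B n → Prop
  | .xra _ _ a => a ∈ U
  | _ => True

/-- `U` is a pure subset of the `S`-act `B`: every finite system of equations with
constants from `U` that is solvable in `B` is solvable in `U`. -/
def IsPure (S : Type u) {B : Type u} [Monoid S] [MulAction S B] (U : Set B) : Prop :=
  ∀ (n : ℕ) (E : List (ActEq S B n)), (∀ e ∈ E, ConstIn U e) →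
    (∃ v : Fin n → B, ∀ e ∈ E, SatEq v e) →
    ∃ v : Fin n → B, (∀ i, v i ∈ U) ∧ ∀ e ∈ E, SatEq v e

/-- `φ : A → C` is a `𝒞`-preenvelope of `A`. -/
def IsPreenvelope {S : Type u} [Monoid S] (𝒞 : (C : Type u) → [MulAction S C] → Prop)
    (A : Type u) [MulAction S A] (C : Type u) [MulAction S C] (φ : A →[S] C) : Prop :=
  𝒞 C ∧ ∀ (C' : Type u) [MulAction S C'], 𝒞 C' →
    ∀ f : A →[S] C', ∃ g : C →[S] C', ∀ a, g (φ a) = f a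

/-- `A` has a `𝒞`-preenvelope. -/
def HasPreenvelope {S : Type u} [Monoid S] (𝒞 : (C : Type u) → [MulAction S C] → Prop)
    (A : Type u) [MulAction S A] : Prop :=
  ∃ (C : Type u) (inst : MulAction S C), letI := inst
    ∃ φ : A →[S] C, IsPreenvelope 𝒞 A C φ

/-- An injective `S`-act: maps into it extend along all embeddings of acts. -/
def IsInjectiveAct (S : Type u) [Monoid S] (E : Type u) [MulAction S E] : Prop :=
  ∀ (A B : Type u) [MulAction S A] [MulAction S B] (i : A →[S] B),
    Function.Injective i → ∀ f : A →[S] E, ∃ g : B →[S] E, ∀ a, g (i a) = f a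

/-- `A` is absolutely pure: it is pure in every act containing it. -/
def IsAbsolutelyPure (S : Type u) [Monoid S] (A : Type u) [MulAction S A] : Prop :=
  ∀ (B : Type u) [MulAction S B] (i : A →[S] B), Function.Injective i →
    IsPure S (Set.range i)

/-- The right ideal of `S` generated by a set `F` (in the act convention `s • t = s * t`). -/
def genIdeal {S : Type u} [Monoid S] (F : Set S) : Set S :=
  {x | ∃ s : S, ∃ f ∈ F, x = s * f}

theorem genIdeal_smul {S : Type u} [Monoid S] (F : Set S) (s : S) {x : S}
    (hx : x ∈ genIdeal F) : s * x ∈ genIdeal F := by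
  obtain ⟨t, f, hf, rfl⟩ := hx; exact ⟨s * t, f, hf, (mul_assoc s t f).symm⟩

/-- A map `h` defined on an ideal `I ⊆ S` extends to an act map `S → A`. -/
def ExtendsHom {S : Type u} [Monoid S] {A : Type u} [MulAction S A] (I : Set S)
    (h : I → A) : Prop :=
  ∃ g : S → A, (∀ s t : S, g (s * t) = s • g t) ∧ ∀ x : I, g x = h x

/-- `A` is weakly f-injective: homs from finitely generated right ideals extend to `S`. -/
def IsWeaklyFInjective (S : Type u) [Monoid S] (A : Type u) [MulAction S A] : Prop :=
  ∀ (F : Finset S) (h : genIdeal (F : Set S) → A),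
    (∀ (s : S) (x : genIdeal (F : Set S)),
      h ⟨s * ↑x, genIdeal_smul _ s x.2⟩ = s • h x) →
    ExtendsHom (genIdeal (F : Set S)) h

/-- `A` is weakly p-injective: homs from principal right ideals extend to `S`. -/
def IsWeaklyPInjective (S : Type u) [Monoid S] (A : Type u) [MulAction S A] : Prop :=
  ∀ (t : S) (h : genIdeal {t} → A),
    (∀ (s : S) (x : genIdeal {t}),
      h ⟨s * ↑x, genIdeal_smul _ s x.2⟩ = s • h x) →
    ExtendsHom (genIdeal {t}) h

/-!
Let `D` be the amalgamated sum of `A` and `B` over `U`, into which `A` embeds. A system with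
constants in `U` that is solvable in `B` is solvable in `D`; its constants lie in the copy of `A`,
so absolute purity of `A` solves it in `A`, and purity of `U` in `A` then solves it in `U`.
-/

namespace ActEq

variable {S X Y Z : Type u} {n : ℕ}

def map (f : X → Y) : ActEq S X n → ActEq S Y n
  | xrxs i r s => xrxs i r s
  | xrys i j r s => xrys i j r s
  | xra i r a => xra i r (f a)

theorem map_comp_map (f : X → Y) (g : Y → Z) :
    map (S := S) (n := n) g ∘ map f = map (g ∘ f) := by
  funext e
  cases e <;> rfl

theorem constIn_range_map (f : X → Y) (e : ActEq S X n) : ConstIn (Set.range f) (e.map f) := by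
  cases e <;> simp only [ConstIn, map, Set.mem_range_self]

theorem exists_map_eq_of_constIn_range {f : X → Y} {e : ActEq S Y n}
    (he : ConstIn (Set.range f) e) : ∃ e' : ActEq S X n, e'.map f = e := by
  cases e with
  | xrxs i r s => exact ⟨xrxs i r s, rfl⟩
  | xrys i j r s => exact ⟨xrys i j r s, rfl⟩
  | xra i r a =>
    obtain ⟨x, rfl⟩ := he
    exact ⟨xra i r x, rfl⟩

def Solvable [Monoid S] [MulAction S X] (E : List (ActEq S X n)) : Prop :=
  ∃ v : Fin n → X, ∀ e ∈ E, SatEq v e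

variable [Monoid S] [MulAction S X] [MulAction S Y]

theorem satEq_map (f : X →[S] Y) {v : Fin n → X} {e : ActEq S X n} (h : SatEq v e) :
    SatEq (f ∘ v) (e.map f) := by
  cases e <;> simp only [SatEq, map, Function.comp_apply, ← map_smul] at h ⊢ <;> rw [h]

theorem satEq_of_map {f : X →[S] Y} (hf : Function.Injective f) {v : Fin n → X}
    {e : ActEq S X n} (h : SatEq (f ∘ v) (e.map f)) : SatEq v e := by
  cases e <;> simpa only [SatEq, map, Function.comp_apply, ← map_smul, hf.eq_iff] using h

theorem Solvable.map {E : List (ActEq S X n)} (f : X →[S] Y) (h : Solvable E) :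
    Solvable (E.map (map f)) := by
  obtain ⟨v, hv⟩ := h
  exact ⟨f ∘ v, by simpa only [List.forall_mem_map] using fun e he => satEq_map f (hv e he)⟩

end ActEq

open ActEq

theorem isPure_range_iff {S X Y : Type u} [Monoid S] [MulAction S X] [MulAction S Y]
    (f : X →[S] Y) (hf : Function.Injective f) :
    IsPure S (Set.range f) ↔
      ∀ (n : ℕ) (E : List (ActEq S X n)), Solvable (E.map (map f)) → Solvable E := by
  constructor
  · intro hpure n E hsolv
    obtain ⟨w, hw_range, hw⟩ :=
      hpure n _ (by simpa only [List.forall_mem_map] using fun e _ => constIn_range_map f e) hsolv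
    choose v hv using hw_range
    obtain rfl : w = f ∘ v := funext fun k => (hv k).symm
    exact ⟨v, fun e he => satEq_of_map hf (hw _ (List.mem_map_of_mem he))⟩
  · intro hsolv n E hconst hsolvY
    have : CanLift (ActEq S Y n) (ActEq S X n) (map f) (ConstIn (Set.range f)) :=
      ⟨fun _ he => exists_map_eq_of_constIn_range he⟩
    lift E to List (ActEq S X n) using hconst
    obtain ⟨v, hv⟩ := hsolv n E hsolvY
    refine ⟨f ∘ v, fun k => Set.mem_range_self (v k), ?_⟩
    simpa only [List.forall_mem_map] using fun e he => satEq_map f (hv e he)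

section Amalgam

variable {S C A B : Type u} [Monoid S] [MulAction S C] [MulAction S A] [MulAction S B]
  (f : C →[S] A) (g : C →[S] B)

/-- Identifies `f c` with `g c`; for injective `f` and `g` this is already an equivalence. -/
def AmalgRel : A ⊕ B → A ⊕ B → Prop
  | .inl a, .inl a' => a = a'
  | .inr b, .inr b' => b = b'
  | .inl a, .inr b => ∃ c, f c = a ∧ g c = b
  | .inr b, .inl a => ∃ c, f c = a ∧ g c = b

variable {f g}

theorem amalgRel_equivalence (hf : Function.Injective f) (hg : Function.Injective g) :
    Equivalence (AmalgRel f g) where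
  refl x := by cases x <;> rfl
  symm {x y} h := by cases x <;> cases y <;> first | exact h.symm | exact h
  trans {x y z} hxy hyz := by
    rcases x with a | b <;> rcases y with a' | b' <;> rcases z with a'' | b'' <;>
      simp only [AmalgRel] at hxy hyz ⊢
    all_goals grind [Function.Injective]

theorem AmalgRel.smul {x y : A ⊕ B} (h : AmalgRel f g x y) (s : S) :
    AmalgRel f g (s • x) (s • y) := by
  rcases x with a | b <;> rcases y with a' | b' <;>
    simp only [AmalgRel, Sum.smul_inl, Sum.smul_inr] at h ⊢
  · exact congrArg _ h
  · obtain ⟨c, rfl, rfl⟩ := h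
    exact ⟨s • c, map_smul f s c, map_smul g s c⟩
  · obtain ⟨c, rfl, rfl⟩ := h
    exact ⟨s • c, map_smul f s c, map_smul g s c⟩
  · exact congrArg _ h

variable (hf : Function.Injective f) (hg : Function.Injective g)

def amalgSetoid : Setoid (A ⊕ B) := ⟨AmalgRel f g, amalgRel_equivalence hf hg⟩

def Amalgam : Type u := Quotient (amalgSetoid hf hg)

instance : MulAction S (Amalgam hf hg) where
  smul s := Quotient.map (s • ·) fun _ _ h => AmalgRel.smul h s
  one_smul := Quotient.ind fun x => congrArg (Quotient.mk _) (one_smul S x)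
  mul_smul r s := Quotient.ind fun x => congrArg (Quotient.mk _) (mul_smul r s x)

def Amalgam.inl : A →[S] Amalgam hf hg where
  toFun a := Quotient.mk _ (.inl a)
  map_smul' _ _ := rfl

def Amalgam.inr : B →[S] Amalgam hf hg where
  toFun b := Quotient.mk _ (.inr b)
  map_smul' _ _ := rfl

theorem Amalgam.inl_injective : Function.Injective (Amalgam.inl hf hg) :=
  fun _ _ h => Quotient.exact h

theorem Amalgam.inr_comp_eq_inl_comp : Amalgam.inr hf hg ∘ g = Amalgam.inl hf hg ∘ f :=
  funext fun c => Quotient.sound (show AmalgRel f g (.inr (g c)) (.inl (f c)) from ⟨c, rfl, rfl⟩)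

end Amalgam

/-- a pure subact of an absolutely pure act is absolutely pure. -/
theorem pure_subact_absolutelyPure {S A : Type u} [Monoid S] [MulAction S A]
    (hA : IsAbsolutelyPure S A) (U : SubMulAction S A)
    (hU : IsPure S (U : Set A)) : IsAbsolutelyPure S U := by
  intro B _ i hi
  have hsub : Function.Injective U.subtype := Subtype.val_injective
  have hU' := (isPure_range_iff U.subtype hsub).1
    (by rwa [SubMulAction.subtype_eq_val, Subtype.range_coe])
  have hA' := (isPure_range_iff _ (Amalgam.inl_injective hsub hi)).1
    (hA _ _ (Amalgam.inl_injective hsub hi))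
  refine (isPure_range_iff i hi).2 fun n E hE => hU' n E (hA' n _ ?_)
  have := hE.map (Amalgam.inr hsub hi)
  rwa [List.map_map, map_comp_map, Amalgam.inr_comp_eq_inl_comp, ← map_comp_map,
    ← List.map_map] at this
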